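/- Let G be a finite p-group with commutator subgroup of order p, p > 2. Then for every x ∈ V(𝔽_p G), writing x = ∑_{g∈G} α_g g, one has x^{p²} = ∑_{g∈G} α_g g^{p²}. Consequently V(𝔽_p G)^{p²} = V(𝔽_p G^{p²}). -/

import Mathlib

open MonoidAlgebra

/-- The augmentation map `𝔽_p G → 𝔽_p`. -/
noncomputable def aug (p : ℕ) [Fact p.Prime] (G : Type*) [Group G] :
    MonoidAlgebra (ZMod p) G →ₐ[ZMod p] ZMod p :=
  MonoidAlgebra.lift (ZMod p) (ZMod p) G 1

/-- The group `V(𝔽_p G)` of normalized units (units of augmentation `1`). -/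
noncomputable def V (p : ℕ) [Fact p.Prime] (G : Type*) [Group G] :
    Subgroup (MonoidAlgebra (ZMod p) G)ˣ :=
  (Units.map (aug p G : MonoidAlgebra (ZMod p) G →* ZMod p)).ker

/-!
A normal subgroup of order `p` in a `p`-group is central, so `G` has class at most two and its
commutators have order `p`. Then `(gh)^n = g^n h^n [h,g]^(n choose 2)`, and since `p` is odd,
`g ↦ g^p` is a homomorphism into the center.

Let `z` generate `G'`. The kernel of `𝔽_p G → 𝔽_p[G/G']` lies in the ideal generated by the
central element `z - 1`, whose `p`-th power is `z^p - 1 = 0`, so every element of that kernel has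
`p`-th power zero. As `𝔽_p[G/G']` is commutative, `x^p` and `y = ∑ α_g g^p` have the same image
there, so `x^p = y + c` with `c^p = 0`; `y` is central, hence
`x^{p²} = y^p + c^p = ∑ α_g g^{p²}` by the Frobenius map on the commutative algebra `𝔽_p[Z(G)]`.

Since `g ↦ g^{p²}` is a homomorphism, `G^{p²}` consists of `p²`-th powers, so a normalized unit
supported on `G^{p²}` has a `p²`-th root in `V(𝔽_p G)`: the root is a unit because its power is,
and its augmentation `a` satisfies `a = a^{p²} = 1` in `𝔽_p`.
-/

open scoped commutatorElement

theorem IsPGroup.le_center_of_card_eq_prime {p : ℕ} [Fact p.Prime] {G : Type*} [Group G]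
    (hG : IsPGroup p G) {N : Subgroup G} [N.Normal] (hN : Nat.card N = p) :
    N ≤ Subgroup.center G := by
  have : Finite N := Nat.finite_of_card_ne_zero (hN ▸ (Fact.out : p.Prime).ne_zero)
  set F := MulAction.fixedPoints (ConjAct G) N
  have : Nonempty F := ⟨⟨1, smul_one⟩⟩
  have hdvd : p ∣ Nat.card F := Nat.modEq_zero_iff_dvd.mp <|
    ((hG.of_equiv ConjAct.toConjAct).card_modEq_card_fixedPoints N).symm.trans
      (hN ▸ Nat.modEq_zero_iff_dvd.mpr dvd_rfl)
  have hF : F = Set.univ := (Set.eq_univ_iff_ncard F).mpr <|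
    le_antisymm (Finite.card_subtype_le _) (hN ▸ Nat.le_of_dvd Nat.card_pos hdvd)
  refine fun n hn => Subgroup.mem_center_iff.mpr fun g => ?_
  have hfix := congrArg Subtype.val
    ((hF ▸ Set.mem_univ _ : (⟨n, hn⟩ : N) ∈ F) (ConjAct.toConjAct g))
  rw [ConjAct.Subgroup.val_conj_smul, ConjAct.toConjAct_smul] at hfix
  exact mul_inv_eq_iff_eq_mul.mp hfix

section CentralCommutators

variable {G : Type*} [Group G]

theorem commutatorElement_mem_commutator (g h : G) : ⁅g, h⁆ ∈ commutator G :=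
  Subgroup.commutator_mem_commutator (Subgroup.mem_top g) (Subgroup.mem_top h)

theorem pow_mul_eq_commutatorElement_pow_mul {g h : G} (hc : ⁅g, h⁆ ∈ Subgroup.center G)
    (n : ℕ) : g ^ n * h = ⁅g, h⁆ ^ n * (h * g ^ n) := by
  have hgh : g * h = ⁅g, h⁆ * (h * g) := by rw [commutatorElement_def]; group
  induction n with
  | zero => simp
  | succ n ih =>
    calc g ^ (n + 1) * h = g * (g ^ n * h) := by rw [pow_succ', mul_assoc]
      _ = ⁅g, h⁆ ^ n * (g * h) * g ^ n := by
        rw [ih, ← mul_assoc, ← mul_assoc, Subgroup.mem_center_iff.mp (pow_mem hc n)]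
        simp only [mul_assoc]
      _ = ⁅g, h⁆ ^ (n + 1) * (h * g ^ (n + 1)) := by
        rw [hgh, pow_succ, pow_succ']; group

theorem mul_pow_eq_commutatorElement_pow_mul {g h : G} (hc : ⁅h, g⁆ ∈ Subgroup.center G)
    (n : ℕ) : (g * h) ^ n = ⁅h, g⁆ ^ n.choose 2 * (g ^ n * h ^ n) := by
  induction n with
  | zero => simp
  | succ n ih =>
    calc (g * h) ^ (n + 1) = ⁅h, g⁆ ^ n.choose 2 * (g ^ n * (h ^ n * g) * h) := by
          rw [pow_succ, ih]; group
      _ = ⁅h, g⁆ ^ n.choose 2 * (g ^ n * ⁅h, g⁆ ^ n * (g * h ^ n) * h) := by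
          rw [pow_mul_eq_commutatorElement_pow_mul hc]; group
      _ = ⁅h, g⁆ ^ (n.choose 2 + n) * (g ^ (n + 1) * h ^ (n + 1)) := by
          rw [Subgroup.mem_center_iff.mp (pow_mem hc n) (g ^ n), pow_add, pow_succ, pow_succ']
          group
      _ = ⁅h, g⁆ ^ (n + 1).choose 2 * (g ^ (n + 1) * h ^ (n + 1)) := by
          rw [Nat.choose_succ_succ', Nat.choose_one_right, add_comm]

variable {p : ℕ}

theorem pow_mem_center_of_commutator_le_center (hcen : commutator G ≤ Subgroup.center G)
    (hexp : ∀ c ∈ commutator G, c ^ p = 1) (g : G) : g ^ p ∈ Subgroup.center G := by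
  have hc := commutatorElement_mem_commutator g
  refine Subgroup.mem_center_iff.mpr fun h => ?_
  rw [pow_mul_eq_commutatorElement_pow_mul (hcen (hc h)), hexp _ (hc h), one_mul]

theorem mul_pow_of_commutator_le_center (hcen : commutator G ≤ Subgroup.center G)
    (hexp : ∀ c ∈ commutator G, c ^ p = 1) (hp : Odd p) (g h : G) :
    (g * h) ^ p = g ^ p * h ^ p := by
  obtain ⟨k, rfl⟩ := hp
  have hchoose : (2 * k + 1).choose 2 = (2 * k + 1) * k := by
    rw [Nat.choose_two_right, Nat.add_sub_cancel, mul_left_comm, Nat.mul_div_cancel_left _ two_pos]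
  rw [mul_pow_eq_commutatorElement_pow_mul (hcen (commutatorElement_mem_commutator h g)), hchoose,
    pow_mul, hexp _ (commutatorElement_mem_commutator h g), one_pow, one_mul]

def powCenterHom (hcen : commutator G ≤ Subgroup.center G)
    (hexp : ∀ c ∈ commutator G, c ^ p = 1) (hp : Odd p) : G →* Subgroup.center G where
  toFun g := ⟨g ^ p, pow_mem_center_of_commutator_le_center hcen hexp g⟩
  map_one' := Subtype.ext (one_pow p)
  map_mul' g h := Subtype.ext (mul_pow_of_commutator_le_center hcen hexp hp g h)

open scoped IsMulCommutative in
def powPrimeSqHom (hcen : commutator G ≤ Subgroup.center G)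
    (hexp : ∀ c ∈ commutator G, c ^ p = 1) (hp : Odd p) : G →* G :=
  (Subgroup.center G).subtype.comp ((powMonoidHom p).comp (powCenterHom hcen hexp hp))

theorem powPrimeSqHom_apply (hcen : commutator G ≤ Subgroup.center G)
    (hexp : ∀ c ∈ commutator G, c ^ p = 1) (hp : Odd p) (g : G) :
    powPrimeSqHom hcen hexp hp g = g ^ (p ^ 2) := by
  show (g ^ p) ^ p = g ^ (p ^ 2)
  rw [← pow_mul, sq]

end CentralCommutators

namespace MonoidAlgebra

instance charP {R M : Type*} [CommSemiring R] [Monoid M] (p : ℕ) [CharP R p] : CharP R[M] p :=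
  charP_of_injective_algebraMap single_right_injective p

theorem frobenius_eq_mapDomainRingHom (p : ℕ) [Fact p.Prime] (M : Type*) [CommMonoid M] :
    frobenius (ZMod p)[M] p = mapDomainRingHom (ZMod p) (powMonoidHom p) :=
  ringHom_ext (fun r => by simp [frobenius_def, single_pow, ZMod.pow_card])
    (fun m => by simp [frobenius_def, single_pow])

theorem commute_mapDomain_center_subtype {R G : Type*} [CommSemiring R] [Group G]
    (w : R[Subgroup.center G]) (r : R[G]) :
    Commute (mapDomainRingHom R (Subgroup.center G).subtype w) r := by
  induction w using induction_linear with
  | zero => simp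
  | add w₁ w₂ h₁ h₂ => rw [map_add]; exact h₁.add_left h₂
  | single m b =>
    rw [mapDomainRingHom_apply, mapDomain_single]
    exact single_commute (fun g => (Subgroup.mem_center_iff.mp m.2 g).symm) (Commute.all b) r

theorem of_sub_one_mem_of_mem_zpowers {R G : Type*} [Ring R] [Group G] {J : Ideal R[G]}
    {z n : G} (hz : of R G z - 1 ∈ J) (hn : n ∈ Subgroup.zpowers z) : of R G n - 1 ∈ J := by
  let H : Subgroup G :=
    { carrier := {g | of R G g - 1 ∈ J}
      one_mem' := by simp [← one_def]
      mul_mem' := fun {a b} ha hb => by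
        have : of R G (a * b) - 1 = of R G a * (of R G b - 1) + (of R G a - 1) := by
          rw [map_mul]; noncomm_ring
        show _ ∈ J
        exact this ▸ J.add_mem (J.mul_mem_left _ hb) ha
      inv_mem' := fun {a} ha => by
        have : of R G a⁻¹ - 1 = -(of R G a⁻¹ * (of R G a - 1)) := by
          rw [mul_sub, ← map_mul, inv_mul_cancel, map_one]; noncomm_ring
        show _ ∈ J
        exact this ▸ J.neg_mem (J.mul_mem_left _ ha) }
  exact Subgroup.zpowers_le.mpr (show z ∈ H from hz) hn

theorem ker_mapDomainRingHom_le {R G H : Type*} [Ring R] [Group G] [Group H] {f : G →* H}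
    (hf : Function.Surjective f) {J : Ideal R[G]} (hJ : ∀ n ∈ f.ker, of R G n - 1 ∈ J) :
    RingHom.ker (mapDomainRingHom R f) ≤ J := by
  let s := Function.surjInv hf
  have hsub : ∀ v : R[G], v - mapDomain s (mapDomain f v) ∈ J := by
    intro v
    induction v using induction_linear with
    | zero => simp
    | add v w hv hw =>
      rw [mapDomain_add, mapDomain_add, add_sub_add_comm]
      exact J.add_mem hv hw
    | single g r =>
      have hker : (s (f g))⁻¹ * g ∈ f.ker := by
        rw [MonoidHom.mem_ker, map_mul, map_inv, Function.surjInv_eq hf, inv_mul_cancel]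
      have : single g r - mapDomain s (mapDomain f (single g r)) =
          single (s (f g)) r * (of R G ((s (f g))⁻¹ * g) - 1) := by
        rw [mapDomain_single, mapDomain_single, mul_sub, of_apply, single_mul_single,
          mul_inv_cancel_left, mul_one, mul_one]
      exact this ▸ J.mul_mem_left _ (hJ _ hker)
  intro v hv
  simpa [show mapDomain f v = 0 from hv] using hsub v

end MonoidAlgebra

theorem pow_eq_zero_of_mem_span_singleton {R : Type*} [Semiring R] {a c : R}
    (ha : ∀ r, Commute a r) {n : ℕ} (han : a ^ n = 0) (hc : c ∈ Ideal.span {a}) :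
    c ^ n = 0 := by
  obtain ⟨b, rfl⟩ := Ideal.mem_span_singleton'.mp hc
  rw [(ha b).symm.mul_pow, han, mul_zero]

section PowPrimeSq

variable {p : ℕ} [Fact p.Prime] {G : Type*} [Group G]

theorem MonoidAlgebra.pow_char_eq_zero_of_mem_ker_abelianization
    (hcen : commutator G ≤ Subgroup.center G) (hexp : ∀ c ∈ commutator G, c ^ p = 1) {z : G}
    (hz : Subgroup.zpowers z = commutator G) {c : (ZMod p)[G]}
    (hc : c ∈ RingHom.ker (mapDomainRingHom (ZMod p) (Abelianization.of (G := G)))) :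
    c ^ p = 0 := by
  have hzG' : z ∈ commutator G := hz ▸ Subgroup.mem_zpowers z
  have hz_central : ∀ r, Commute (of (ZMod p) G z - 1) r := fun r =>
    (of_commute (fun g => (Subgroup.mem_center_iff.mp (hcen hzG') g).symm) r).sub_left
      (Commute.one_left r)
  have hz_nil : (of (ZMod p) G z - 1) ^ p = 0 := by
    rw [sub_pow_char_of_commute p (Commute.one_right _), one_pow, ← map_pow, hexp z hzG',
      map_one, sub_self]
  refine pow_eq_zero_of_mem_span_singleton hz_central hz_nil
    (ker_mapDomainRingHom_le (f := Abelianization.of) (QuotientGroup.mk'_surjective _)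
      (fun n hn => ?_) hc)
  rw [Abelianization.ker_of, ← hz] at hn
  exact of_sub_one_mem_of_mem_zpowers (Ideal.subset_span rfl) hn

open scoped IsMulCommutative in
theorem MonoidAlgebra.pow_prime_sq_eq_mapDomain (hcen : commutator G ≤ Subgroup.center G)
    (hexp : ∀ c ∈ commutator G, c ^ p = 1) (hp : Odd p) {z : G}
    (hz : Subgroup.zpowers z = commutator G) (x : (ZMod p)[G]) :
    x ^ (p ^ 2) = mapDomain (· ^ (p ^ 2)) x := by
  set q := powCenterHom hcen hexp hp
  set ι := (Subgroup.center G).subtype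
  set y := mapDomainRingHom (ZMod p) ι (mapDomainRingHom (ZMod p) q x)
  have hab : (Abelianization.of (G := G)).comp (ι.comp q) =
      (powMonoidHom p).comp Abelianization.of := by
    ext g; simp [ι, q, powCenterHom]
  have hker :
      x ^ p - y ∈ RingHom.ker (mapDomainRingHom (ZMod p) (Abelianization.of (G := G))) := by
    rw [RingHom.mem_ker, map_sub, map_pow, ← frobenius_def, frobenius_eq_mapDomainRingHom]
    simp only [y, ← RingHom.comp_apply, ← mapDomainRingHom_comp, hab, sub_self]
  have hy : y ^ p = mapDomain (· ^ (p ^ 2)) x := by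
    rw [← map_pow, ← frobenius_def, frobenius_eq_mapDomainRingHom]
    simp only [← RingHom.comp_apply, ← mapDomainRingHom_comp]
    exact congrArg (mapDomain · x) (funext (powPrimeSqHom_apply hcen hexp hp))
  calc x ^ (p ^ 2) = (y + (x ^ p - y)) ^ p := by rw [add_sub_cancel, sq, pow_mul]
    _ = y ^ p := by
      rw [add_pow_char_of_commute p (commute_mapDomain_center_subtype _ _),
        pow_char_eq_zero_of_mem_ker_abelianization hcen hexp hz hker, add_zero]
    _ = _ := hy

end PowPrimeSq

theorem MonoidAlgebra.mapDomain_eq_sum_smul_of {R M N : Type*} [Semiring R] [Fintype M]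
    [MulOneClass N] (f : M → N) (v : R[M]) :
    mapDomain f v = ∑ m : M, v.coeff m • of R N (f m) := by
  conv_lhs => rw [← sum_coeff_single v]
  rw [mapDomain_sum, Finsupp.sum_fintype _ _ (by simp)]
  simp

theorem MonoidAlgebra.exists_mapDomain_eq {R M N : Type*} [Semiring R] [Nonempty M] {f : M → N}
    {u : R[N]} (hu : ∀ n ∈ u.coeff.support, n ∈ Set.range f) :
    ∃ x : R[M], mapDomain f x = u := by
  refine ⟨mapDomain (Function.invFun f) u, coeff_injective ?_⟩
  rw [coeff_mapDomain, coeff_mapDomain, ← Finsupp.mapDomain_comp]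
  exact (Finsupp.mapDomain_congr fun n hn => Function.invFun_eq (hu n hn)).trans
    Finsupp.mapDomain_id

theorem mem_V_iff {p : ℕ} [Fact p.Prime] {G : Type*} [Group G]
    {u : (MonoidAlgebra (ZMod p) G)ˣ} : u ∈ V p G ↔ aug p G u = 1 := by
  rw [V, MonoidHom.mem_ker, Units.ext_iff]
  rfl

theorem exists_mem_V_val_eq_of_pow_eq {p : ℕ} [Fact p.Prime] {G : Type*} [Group G]
    {u : (MonoidAlgebra (ZMod p) G)ˣ} (hu : u ∈ V p G) {x : MonoidAlgebra (ZMod p) G} {n : ℕ}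
    (hx : x ^ (p ^ n) = u) : ∃ X ∈ V p G, (X : MonoidAlgebra (ZMod p) G) = x := by
  obtain ⟨X, rfl⟩ :=
    (isUnit_pow_iff (pow_ne_zero n (Fact.out : p.Prime).ne_zero)).mp (hx ▸ u.isUnit)
  refine ⟨X, ?_, rfl⟩
  rw [mem_V_iff] at hu ⊢
  rw [← ZMod.pow_card_pow (n := n) (aug p G X), ← map_pow, hx, hu]

theorem mem_range_pow_of_mem_closure {p : ℕ} {G : Type*} [Group G]
    (hcen : commutator G ≤ Subgroup.center G) (hexp : ∀ c ∈ commutator G, c ^ p = 1)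
    (hp : Odd p) {g : G} (hg : g ∈ Subgroup.closure {h : G | ∃ g₀ : G, h = g₀ ^ (p ^ 2)}) :
    g ∈ Set.range (· ^ (p ^ 2)) := by
  have hle : Subgroup.closure {h : G | ∃ g₀ : G, h = g₀ ^ (p ^ 2)} ≤
      (powPrimeSqHom hcen hexp hp).range := by
    rw [Subgroup.closure_le]
    rintro _ ⟨g₀, rfl⟩
    exact ⟨g₀, powPrimeSqHom_apply hcen hexp hp g₀⟩
  obtain ⟨g₀, rfl⟩ := hle hg
  exact ⟨g₀, (powPrimeSqHom_apply hcen hexp hp g₀).symm⟩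

/-- For an odd prime `p` and a finite `p`-group `G` with `|G'| = p`: for every
normalized unit `x = ∑ α_g g`, `x^{p²} = ∑ α_g g^{p²}`; consequently
`V(𝔽_p G)^{p²} = V(𝔽_p G^{p²})`. -/
theorem pow_p_sq_V (p : ℕ) [Fact p.Prime] (hodd : 2 < p) (G : Type*) [Group G]
    [Fintype G] (hG : IsPGroup p G) (hG' : Nat.card (commutator G) = p) :
    (∀ x ∈ V p G,
      ((x ^ (p ^ 2) : (MonoidAlgebra (ZMod p) G)ˣ) : MonoidAlgebra (ZMod p) G) =
        ∑ g : G, ((x : (MonoidAlgebra (ZMod p) G)ˣ) : MonoidAlgebra (ZMod p) G).coeff g •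
          MonoidAlgebra.of (ZMod p) G (g ^ (p ^ 2))) ∧
    {u : (MonoidAlgebra (ZMod p) G)ˣ | ∃ x ∈ V p G, u = x ^ (p ^ 2)} =
      {u : (MonoidAlgebra (ZMod p) G)ˣ | u ∈ V p G ∧
        ∀ g ∈ ((u : (MonoidAlgebra (ZMod p) G)ˣ) : MonoidAlgebra (ZMod p) G).coeff.support,
          g ∈ Subgroup.closure {h : G | ∃ g₀ : G, h = g₀ ^ (p ^ 2)}} := by
  classical
  have hcen := hG.le_center_of_card_eq_prime hG'
  have hexp : ∀ c ∈ commutator G, c ^ p = 1 := fun c hc =>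
    congrArg Subtype.val (hG' ▸ pow_card_eq_one' : (⟨c, hc⟩ : commutator G) ^ p = 1)
  have hp : Odd p := (Fact.out : p.Prime).odd_of_ne_two hodd.ne'
  obtain ⟨z, hz⟩ :=
    (commutator G).isCyclic_iff_exists_zpowers_eq_top.mp (isCyclic_of_prime_card hG')
  have hpow := pow_prime_sq_eq_mapDomain hcen hexp hp hz
  refine ⟨fun x _ => by rw [Units.val_pow_eq_pow_val, hpow, mapDomain_eq_sum_smul_of],
    Set.ext fun u => ⟨?_, ?_⟩⟩
  · rintro ⟨x, hx, rfl⟩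
    refine ⟨pow_mem hx _, fun g hg => ?_⟩
    rw [Units.val_pow_eq_pow_val, hpow, coeff_mapDomain] at hg
    obtain ⟨g₀, -, rfl⟩ := Finset.mem_image.mp (Finsupp.mapDomain_support hg)
    exact Subgroup.subset_closure ⟨g₀, rfl⟩
  · rintro ⟨hu, hsupp⟩
    obtain ⟨x, hx⟩ := exists_mapDomain_eq fun g hg =>
      mem_range_pow_of_mem_closure hcen hexp hp (hsupp g hg)
    obtain ⟨X, hX, rfl⟩ := exists_mem_V_val_eq_of_pow_eq hu ((hpow x).trans hx)
    exact ⟨X, hX, Units.ext (by rw [Units.val_pow_eq_pow_val, hpow, hx])⟩
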